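/- The number of legal histories of the Cyclical Three Rows Game on n columns (n ≥ 3) is 3^n - 2^n - n. In particular, the number of illegal histories is 2^n + n. Formally, with histories elements of {T, M, B}^n (the last coordinate being the cycle choice), a history is illegal if and only if it satisfies one of: (1) all path choices (first n-1 coordinates) are T and the cycle choice is M or B; (2) exactly one path choice is M, the rest are T, and the cycle choice is B; (3) all path choices are in {M, B} with at least one B, and the cycle choice is T or M; (4) all path choices are M and the cycle choice is T. -/

import Mathlib

/-- A history of the Cyclical Three Rows Game on `n + 1` columns is `h : Fin (n+1) → Fin 3`,
with `0` = top (T), `1` = middle (M), `2` = bottom (B); coordinates `< n` are the path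
choices and the last coordinate is the cycle choice.  `Illegal n h` holds iff `h`
satisfies one of the four illegality conditions. -/
def Illegal (n : ℕ) (h : Fin (n + 1) → Fin 3) : Prop :=
  ((∀ i : Fin (n + 1), (i : ℕ) < n → h i = 0) ∧ (h (Fin.last n) = 1 ∨ h (Fin.last n) = 2)) ∨
  ((∃ i : Fin (n + 1), (i : ℕ) < n ∧ h i = 1 ∧
      ∀ j : Fin (n + 1), (j : ℕ) < n → j ≠ i → h j = 0) ∧ h (Fin.last n) = 2) ∨
  ((∀ i : Fin (n + 1), (i : ℕ) < n → h i = 1 ∨ h i = 2) ∧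
      (∃ i : Fin (n + 1), (i : ℕ) < n ∧ h i = 2) ∧
      (h (Fin.last n) = 0 ∨ h (Fin.last n) = 1)) ∨
  ((∀ i : Fin (n + 1), (i : ℕ) < n → h i = 1) ∧ h (Fin.last n) = 0)

/-!
Write a history as `Fin.snoc g c`, with path part `g` and cycle choice `c`. For each `c` the
illegal `g` form an explicit set: for `c = T` the paths in `{M, B}ⁿ` (`2ⁿ` of them); for `c = M`
the all-`T` path together with the paths in `{M, B}ⁿ` other than the all-`M` one (again `2ⁿ`);
for `c = B` the all-`T` path together with the `n` paths having a single `M` and `T` elsewhere.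
So there are `2ⁿ⁺¹ + n + 1` illegal histories, and the legal ones are the rest of the `3ⁿ⁺¹`.
-/

open Finset

namespace CyclicalThreeRows

theorem card_subtype_eq_sum_card_subtype_snoc {α : Type*} [Fintype α] {n : ℕ}
    (P : (Fin (n + 1) → α) → Prop) :
    Nat.card {h // P h} = ∑ c : α, Nat.card {g : Fin n → α // P (Fin.snoc g c)} := by
  rw [← Nat.card_sigma]
  exact Nat.card_congr <|
    ((Fin.snocEquiv fun _ => α).subtypeEquiv fun _ => Iff.rfl).symm.trans
      (Equiv.subtypeProdEquivSigmaSubtype fun c g => P (Fin.snoc g c))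

theorem card_subtype_not {α : Type*} [Finite α] (p : α → Prop) :
    Nat.card {x // ¬ p x} = Nat.card α - Nat.card {x // p x} := by
  classical
  have := Fintype.ofFinite α
  simp only [Nat.card_eq_fintype_card, Fintype.card_subtype_compl]

theorem exists_pi_single_eq_iff {ι M : Type*} [DecidableEq ι] [Zero M] (g : ι → M) (a : M) :
    (∃ j, Pi.single j a = g) ↔ ∃ j, g j = a ∧ ∀ k, k ≠ j → g k = 0 := by
  refine exists_congr fun j => ⟨?_, fun ⟨hj, hk⟩ => ?_⟩
  · rintro rfl
    exact ⟨by simp, fun k hk => by simp [hk]⟩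
  · ext k
    by_cases h : k = j
    · subst h
      simp [hj]
    · simp [h, hk k h]

theorem pi_single_left_injective {ι M : Type*} [DecidableEq ι] [Zero M] {a : M} (ha : a ≠ 0) :
    Function.Injective fun j : ι => Pi.single j a := by
  intro j k hjk
  by_contra hne
  have := congrFun hjk j
  simp [hne, ha] at this

theorem exists_eq_two_iff_exists_ne_one {ι : Type*} {g : ι → Fin 3}
    (hg : ∀ i, g i = 1 ∨ g i = 2) : (∃ i, g i = 2) ↔ ∃ i, g i ≠ 1 :=
  exists_congr fun i => by rcases hg i with h | h <;> simp [h]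

variable {n : ℕ}

def mbPaths (n : ℕ) : Finset (Fin n → Fin 3) := Fintype.piFinset fun _ => {1, 2}

def oneMPaths (n : ℕ) : Finset (Fin n → Fin 3) := univ.image fun j => Pi.single j 1

theorem mem_mbPaths {g : Fin n → Fin 3} : g ∈ mbPaths n ↔ ∀ j, g j = 1 ∨ g j = 2 := by
  simp [mbPaths]

theorem mem_oneMPaths {g : Fin n → Fin 3} :
    g ∈ oneMPaths n ↔ ∃ j, g j = 1 ∧ ∀ k, k ≠ j → g k = 0 := by
  simp only [oneMPaths, mem_image, mem_univ, true_and, exists_pi_single_eq_iff]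

def illegalPaths (n : ℕ) : Fin 3 → Finset (Fin n → Fin 3) :=
  ![mbPaths n, insert 0 ((mbPaths n).erase 1), insert 0 (oneMPaths n)]

theorem illegal_snoc_iff (g : Fin n → Fin 3) (c : Fin 3) :
    Illegal n (Fin.snoc g c) ↔ g ∈ illegalPaths n c := by
  unfold Illegal
  simp only [Fin.forall_fin_succ', Fin.exists_fin_succ', Fin.snoc_castSucc, Fin.snoc_last,
    Fin.val_castSucc, Fin.val_last, Fin.is_lt, lt_irrefl, false_and, or_false, false_imp_iff,
    true_and, and_true, forall_const, ne_eq, Fin.castSucc_inj]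
  fin_cases c <;>
    simp only [illegalPaths, Fin.zero_eta, Fin.mk_one, Fin.reduceFinMk, Matrix.cons_val,
      mem_insert, mem_erase, mem_mbPaths, mem_oneMPaths, funext_iff, Function.ne_iff,
      Pi.zero_apply, Pi.one_apply, Fin.reduceEq, or_true, and_true, and_false, or_false, false_or]
  · constructor
    · rintro (⟨hMB, -⟩ | hM) i
      exacts [hMB i, Or.inl (hM i)]
    · intro hMB
      by_cases hM : ∀ i, g i = 1
      · exact Or.inr hM
      · exact Or.inl ⟨hMB, (exists_eq_two_iff_exists_ne_one hMB).2 (not_forall.1 hM)⟩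
  · exact or_congr_right
      ⟨fun ⟨hMB, hB⟩ => ⟨(exists_eq_two_iff_exists_ne_one hMB).1 hB, hMB⟩,
        fun ⟨hM, hMB⟩ => ⟨hMB, (exists_eq_two_iff_exists_ne_one hMB).2 hM⟩⟩

theorem card_mbPaths : #(mbPaths n) = 2 ^ n := by
  simp [mbPaths]

theorem card_illegalPaths_zero : #(illegalPaths n 0) = 2 ^ n :=
  card_mbPaths

theorem card_illegalPaths_one : #(illegalPaths n 1) = 2 ^ n := by
  have zero_notMem : (0 : Fin n → Fin 3) ∉ (mbPaths n).erase 1 := by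
    intro hmem
    obtain ⟨hne, hMB⟩ := mem_erase.1 hmem
    obtain ⟨i, -⟩ := Function.ne_iff.1 hne
    simpa using mem_mbPaths.1 hMB i
  have one_mem : (1 : Fin n → Fin 3) ∈ mbPaths n := mem_mbPaths.2 fun _ => Or.inl rfl
  change #(insert 0 _) = _
  rw [card_insert_of_notMem zero_notMem, card_erase_of_mem one_mem, card_mbPaths,
    Nat.sub_add_cancel Nat.one_le_two_pow]

theorem card_illegalPaths_two : #(illegalPaths n 2) = n + 1 := by
  have zero_notMem : (0 : Fin n → Fin 3) ∉ oneMPaths n := by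
    simp [oneMPaths]
  change #(insert 0 _) = _
  rw [card_insert_of_notMem zero_notMem, oneMPaths,
    card_image_of_injective _ (pi_single_left_injective one_ne_zero), card_univ, Fintype.card_fin]

theorem card_illegal (n : ℕ) :
    Nat.card {h : Fin (n + 1) → Fin 3 // Illegal n h} = 2 ^ (n + 1) + (n + 1) := by
  simp only [card_subtype_eq_sum_card_subtype_snoc, illegal_snoc_iff, Nat.card_eq_finsetCard,
    Fin.sum_univ_three, card_illegalPaths_zero, card_illegalPaths_one, card_illegalPaths_two]
  ring

end CyclicalThreeRows

open CyclicalThreeRows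

theorem cyclical_history_count_general (n : ℕ) :
    Nat.card {h : Fin (n + 1) → Fin 3 // ¬ Illegal n h}
        = 3 ^ (n + 1) - 2 ^ (n + 1) - (n + 1) ∧
    Nat.card {h : Fin (n + 1) → Fin 3 // Illegal n h} = 2 ^ (n + 1) + (n + 1) := by
  refine ⟨?_, card_illegal n⟩
  rw [card_subtype_not, card_illegal, Nat.card_fun, Nat.card_fin, Nat.card_fin, Nat.sub_sub]

/-- The Cyclical Three Rows Game on `n + 1 ≥ 3` columns has `3^(n+1) - 2^(n+1) - (n+1)`
legal histories; in particular `2^(n+1) + (n+1)` illegal ones. -/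
theorem cyclical_history_count (n : ℕ) (hn : 2 ≤ n) :
    Nat.card {h : Fin (n + 1) → Fin 3 // ¬ Illegal n h}
        = 3 ^ (n + 1) - 2 ^ (n + 1) - (n + 1) ∧
    Nat.card {h : Fin (n + 1) → Fin 3 // Illegal n h} = 2 ^ (n + 1) + (n + 1) :=
  cyclical_history_count_general n
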